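/- Let B ∈ ℝ³ be a unit vector, let ε > 0 and let v : ℝ → ℝ³ be differentiable with v'(t) = (1/ε) (v(t) × B) for all t. Then the filtered variable y(t) = cos(t/ε) v(t) + (1 − cos(t/ε)) ⟨B, v(t)⟩ B − sin(t/ε) (v(t) × B) is constant in t: y(t) = v(0) for all t ∈ ℝ. (The filter (3.8) exactly removes the oscillation generated by the stiff Lorentz term when B is constant.) -/

import Mathlib

/-!
Write `L` for the map `u ↦ u × B`. For a unit vector `B`, `L² u = ⟪B, u⟫ B - u`, hence `L³ = -L`,
and the filter is Rodrigues' formula `U s = 1 - sin s • L + (1 - cos s) • L²` (that is, `exp (-s L)`)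
evaluated at `s = t / ε`. Any such `U` satisfies `U' = -U L`, so by the product rule the derivative
of `U (t / ε) (v t)` is `-U (t / ε) (ε⁻¹ • L (v t)) + U (t / ε) (v' t) = 0`.
-/

open RealInnerProductSpace

/-- Three-dimensional cross product on `EuclideanSpace ℝ (Fin 3)`. -/
noncomputable def cross3 (u v : EuclideanSpace ℝ (Fin 3)) : EuclideanSpace ℝ (Fin 3) :=
  WithLp.toLp 2 (crossProduct (fun i => u i) (fun i => v i))

section CrossProduct

variable (B : EuclideanSpace ℝ (Fin 3))

theorem cross3_self : cross3 B B = 0 := by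
  simp [cross3, cross_self]

theorem cross3_cross3_right (u : EuclideanSpace ℝ (Fin 3)) :
    cross3 (cross3 u B) B = ⟪B, u⟫ • B - ⟪B, B⟫ • u := by
  simp only [cross3, EuclideanSpace.inner_eq_star_dotProduct, star_trivial,
    cross_cross_eq_smul_sub_smul, dotProduct_comm (WithLp.ofLp B)]
  rfl

noncomputable def crossRight : EuclideanSpace ℝ (Fin 3) →L[ℝ] EuclideanSpace ℝ (Fin 3) :=
  LinearMap.toContinuousLinearMap <|
    (WithLp.linearEquiv 2 ℝ (Fin 3 → ℝ)).symm.toLinearMap ∘ₗ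
      crossProduct.flip (WithLp.ofLp B) ∘ₗ (WithLp.linearEquiv 2 ℝ (Fin 3 → ℝ)).toLinearMap

@[simp]
theorem crossRight_apply (u : EuclideanSpace ℝ (Fin 3)) : crossRight B u = cross3 u B := rfl

variable {B}

theorem crossRight_sq_apply (hB : ‖B‖ = 1) (u : EuclideanSpace ℝ (Fin 3)) :
    (crossRight B ^ 2) u = ⟪B, u⟫ • B - u := by
  rw [pow_two, mul_apply_eq_comp, crossRight_apply, crossRight_apply,
    cross3_cross3_right, real_inner_self_eq_norm_sq, hB, one_pow, one_smul]

theorem crossRight_pow_three (hB : ‖B‖ = 1) : crossRight B ^ 3 = -crossRight B := by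
  ext1 u
  rw [pow_succ', mul_apply_eq_comp, crossRight_sq_apply hB, map_sub, map_smul,
    crossRight_apply, cross3_self, smul_zero, zero_sub, neg_apply]

end CrossProduct

theorem apply_eq_apply_zero_of_hasDerivAt_neg_mul {E : Type*} [NormedAddCommGroup E]
    [NormedSpace ℝ E] {U : ℝ → E →L[ℝ] E} {A : E →L[ℝ] E}
    {v : ℝ → E} (hU : ∀ t, HasDerivAt U (-(U t * A)) t) (hv : ∀ t, HasDerivAt v (A (v t)) t)
    (t : ℝ) : U t (v t) = U 0 (v 0) := by
  have hUv : ∀ t, HasDerivAt (fun t => U t (v t)) 0 t := fun t => by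
    simpa using (hU t).clm_apply (hv t)
  exact is_const_of_deriv_eq_zero (fun t => (hUv t).differentiableAt)
    (fun t => (hUv t).deriv) t 0

section Rodrigues

variable {R : Type*} [NormedRing R] [NormedAlgebra ℝ R]

noncomputable def rodrigues (L : R) (s : ℝ) : R :=
  1 - Real.sin s • L + (1 - Real.cos s) • L ^ 2

@[simp]
theorem rodrigues_zero (L : R) : rodrigues L 0 = 1 := by
  simp [rodrigues]

theorem hasDerivAt_rodrigues {L : R} (hL : L ^ 3 = -L) (s : ℝ) :
    HasDerivAt (rodrigues L) (-(rodrigues L s * L)) s := by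
  have h := ((hasDerivAt_const s (1 : R)).sub ((Real.hasDerivAt_sin s).smul_const L)).add
    (((hasDerivAt_const s (1 : ℝ)).sub (Real.hasDerivAt_cos s)).smul_const (L ^ 2))
  refine h.congr_deriv ?_
  have hL3 : L ^ 2 * L = -L := by rw [← pow_succ, hL]
  simp only [rodrigues, sub_mul, add_mul, one_mul, smul_mul_assoc, ← pow_two, hL3]
  module

theorem hasDerivAt_rodrigues_div {L : R} (hL : L ^ 3 = -L) (ε t : ℝ) :
    HasDerivAt (fun t => rodrigues L (t / ε)) (-(rodrigues L (t / ε) * ((1 / ε) • L))) t := by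
  refine ((hasDerivAt_rodrigues hL (t / ε)).scomp t
    ((hasDerivAt_id t).div_const ε)).congr_deriv ?_
  rw [mul_smul_comm, smul_neg]

end Rodrigues

theorem rodrigues_crossRight_apply {B : EuclideanSpace ℝ (Fin 3)} (hB : ‖B‖ = 1) (s : ℝ)
    (u : EuclideanSpace ℝ (Fin 3)) :
    rodrigues (crossRight B) s u =
      Real.cos s • u + (1 - Real.cos s) • (⟪B, u⟫ • B) - Real.sin s • cross3 u B := by
  rw [rodrigues, add_apply, sub_apply, smul_apply, smul_apply, crossRight_sq_apply hB,
    crossRight_apply, one_apply_eq_self]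
  module

theorem filter_removes_oscillation_general
    (B : EuclideanSpace ℝ (Fin 3)) (hB : ‖B‖ = 1)
    (ε : ℝ)
    (v : ℝ → EuclideanSpace ℝ (Fin 3))
    (hv : ∀ t : ℝ, HasDerivAt v ((1 / ε) • cross3 (v t) B) t) :
    ∀ t : ℝ,
      Real.cos (t / ε) • v t + (1 - Real.cos (t / ε)) • (⟪B, v t⟫ • B)
        - Real.sin (t / ε) • cross3 (v t) B = v 0 := by
  intro t
  have h := apply_eq_apply_zero_of_hasDerivAt_neg_mul
    (hasDerivAt_rodrigues_div (crossRight_pow_three hB) ε) hv t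
  rwa [zero_div, rodrigues_zero, one_apply_eq_self, rodrigues_crossRight_apply hB] at h

/-- The filter (3.8) exactly removes the oscillation generated by the stiff Lorentz
term when `B` is a constant unit vector: if `v' = (1/ε) v × B` then the filtered
variable `y(t)` is constantly equal to `v(0)`. -/
theorem filter_removes_oscillation
    (B : EuclideanSpace ℝ (Fin 3)) (hB : ‖B‖ = 1)
    (ε : ℝ) (hε : 0 < ε)
    (v : ℝ → EuclideanSpace ℝ (Fin 3))
    (hv : ∀ t : ℝ, HasDerivAt v ((1 / ε) • cross3 (v t) B) t) :
    ∀ t : ℝ,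
      Real.cos (t / ε) • v t + (1 - Real.cos (t / ε)) • (⟪B, v t⟫ • B)
        - Real.sin (t / ε) • cross3 (v t) B = v 0 :=
  filter_removes_oscillation_general B hB ε v hv
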